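/- arXiv:1708.01305 — 7 statements merged into one kernel-verified Lean document; each statement's English description precedes it below -/
import Mathlib

section
/- Let G be the direct product of complete graphs K_{n₁} × ⋯ × K_{n_t} with 2 ≤ n₁ ≤ n₂ ≤ ⋯ ≤ n_t and t ≥ 3. If m is a nonnegative integer such that (t+m)/(m+1) < n₁ and t + m < n₂, then the total domination number of G is at most t + m + 1. Moreover, the set {y_0, y_1, ..., y_{t+m}}, where y_r is the vertex whose i-th coordinate is r mod n_i, is a total dominating set. -/
/-- `D` is a dominating set of `G`. -/
def IsDomSet {V : Type*} (G : SimpleGraph V) (D : Set V) : Prop :=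
  ∀ v, v ∈ D ∨ ∃ d ∈ D, G.Adj v d

/-- `D` is a total dominating set of `G`. -/
def IsTotalDomSet {V : Type*} (G : SimpleGraph V) (D : Set V) : Prop :=
  ∀ v, ∃ d ∈ D, G.Adj v d

/-- `D` is a minimal dominating set of `G`. -/
def IsMinimalDomSet {V : Type*} (G : SimpleGraph V) (D : Set V) : Prop :=
  IsDomSet G D ∧ ∀ D' ⊂ D, ¬ IsDomSet G D'

/-- The domination number of `G`. -/
noncomputable def domNum {V : Type*} (G : SimpleGraph V) : ℕ :=
  sInf {k | ∃ D : Set V, IsDomSet G D ∧ D.ncard = k}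

/-- The total domination number of `G`. -/
noncomputable def totalDomNum {V : Type*} (G : SimpleGraph V) : ℕ :=
  sInf {k | ∃ D : Set V, IsTotalDomSet G D ∧ D.ncard = k}

/-- The upper domination number of `G`. -/
noncomputable def upperDomNum {V : Type*} (G : SimpleGraph V) : ℕ :=
  sSup {k | ∃ D : Set V, IsMinimalDomSet G D ∧ D.ncard = k}

/-- Jacobsthal's function. -/
noncomputable def jacobsthal (n : ℕ) : ℕ :=
  sInf {m | 0 < m ∧ ∀ x : ℤ, ∃ i : ℕ, i < m ∧ Int.gcd (x + i) n = 1}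

/-- The unitary Cayley graph of `ℤ/nℤ`. -/
def unitaryCayley (n : ℕ) : SimpleGraph (ZMod n) where
  Adj x y := x ≠ y ∧ IsUnit (x - y)
  symm := by
    constructor
    rintro x y ⟨h1, h2⟩
    exact ⟨h1.symm, by simpa [neg_sub] using h2.neg⟩
  loopless := by constructor; rintro x ⟨h, _⟩; exact h rfl

/-- The direct product of complete graphs `K_{n 0} × ⋯ × K_{n (t-1)}`. -/
def completeProd (t : ℕ) (n : Fin t → ℕ) : SimpleGraph (∀ i, ZMod (n i)) where
  Adj x y := x ≠ y ∧ ∀ i, x i ≠ y i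
  symm := by constructor; rintro x y ⟨h1, h2⟩; exact ⟨h1.symm, fun i => (h2 i).symm⟩
  loopless := by constructor; rintro x ⟨h, _⟩; exact h rfl

/-- The direct product of balanced complete multipartite graphs
`K[a 0, b 0] × ⋯ × K[a (t-1), b (t-1)]`, where `K[a,b]` has vertex set `ZMod (a*b)`
with `x ~ y` iff `x ≢ y (mod b)`. -/
def multipartiteProd (t : ℕ) (a b : Fin t → ℕ) :
    SimpleGraph (∀ i, ZMod (a i * b i)) where
  Adj x y := x ≠ y ∧ ∀ i, (x i).val % b i ≠ (y i).val % b i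
  symm := by constructor; rintro x y ⟨h1, h2⟩; exact ⟨h1.symm, fun i => (h2 i).symm⟩
  loopless := by constructor; rintro x ⟨h, _⟩; exact h rfl

/-- The direct (tensor) product of two graphs. -/
def directProd {V W : Type*} (G : SimpleGraph V) (H : SimpleGraph W) :
    SimpleGraph (V × W) where
  Adj x y := G.Adj x.1 y.1 ∧ H.Adj x.2 y.2
  symm := by constructor; rintro x y ⟨h1, h2⟩; exact ⟨h1.symm, h2.symm⟩
  loopless := by constructor; rintro x ⟨h, _⟩; exact G.loopless.irrefl _ h

/-!
A vertex `v` is adjacent to `y_r` exactly when `r ≢ v i (mod n i)` for every coordinate `i`.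
Among `r = 0, …, t + m`, at most `m + 1` values are congruent to `v 0` modulo `n 0`, since
`t + m < n 0 * (m + 1)`, and for `i ≥ 1` at most one value is congruent to `v i` modulo `n i`,
since `t + m < n 1 ≤ n i`. These exclude at most `t + m` of the `t + m + 1` values of `r`,
so some `y_r` is adjacent to `v`.
-/

open Finset

lemma totalDomNum_le_ncard {V : Type*} {G : SimpleGraph V} {D : Set V}
    (hD : IsTotalDomSet G D) : totalDomNum G ≤ D.ncard :=
  Nat.sInf_le ⟨D, hD, rfl⟩

lemma ncard_setOf_exists_le_eq_le {α : Type*} (f : ℕ → α) (L : ℕ) :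
    {y | ∃ r, r ≤ L ∧ y = f r}.ncard ≤ L + 1 := by
  have himage : {y | ∃ r, r ≤ L ∧ y = f r} = f '' ↑(range (L + 1)) := by
    ext y
    simp [eq_comm]
  rw [himage]
  exact (Set.ncard_image_le (finite_toSet _)).trans (by simp)

lemma card_filter_natCast_eq_le {k N q : ℕ} (hN : N ≤ k * q) (a : ZMod k) :
    #{r ∈ range N | ((r : ℕ) : ZMod k) = a} ≤ q := by
  calc #{r ∈ range N | ((r : ℕ) : ZMod k) = a} ≤ #(range q) := by
        refine card_le_card_of_injOn (· / k) (fun r hr => ?_) (fun r₁ hr₁ r₂ hr₂ hdiv => ?_)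
        · simp only [coe_filter, mem_range, Set.mem_ofPred_eq, coe_range, Set.mem_Iio] at hr ⊢
          exact Nat.div_lt_of_lt_mul (by omega)
        · simp only [coe_filter, mem_range, Set.mem_ofPred_eq] at hr₁ hr₂ hdiv
          have hmod : r₁ % k = r₂ % k :=
            (ZMod.natCast_eq_natCast_iff' _ _ _).1 (hr₁.2.trans hr₂.2.symm)
          rw [← Nat.div_add_mod r₁ k, ← Nat.div_add_mod r₂ k, hdiv, hmod]
    _ = q := card_range q

lemma exists_lt_forall_natCast_ne {ι : Type*} [Fintype ι] (k : ι → ℕ) (v : ∀ i, ZMod (k i))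
    {N : ℕ} (h : ∑ i, #{r ∈ range N | ((r : ℕ) : ZMod (k i)) = v i} < N) :
    ∃ r < N, ∀ i, (r : ZMod (k i)) ≠ v i := by
  by_contra! hcover
  have hsub : range N ⊆ univ.biUnion fun i => {r ∈ range N | ((r : ℕ) : ZMod (k i)) = v i} := by
    intro r hr
    obtain ⟨i, hi⟩ := hcover r (mem_range.1 hr)
    exact mem_biUnion.2 ⟨i, mem_univ i, mem_filter.2 ⟨hr, hi⟩⟩
  have := (card_le_card hsub).trans card_biUnion_le
  rw [card_range] at this
  omega

lemma isTotalDomSet_completeProd_diagonal {t : ℕ} (ht : 0 < t) {n : Fin t → ℕ} {L : ℕ}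
    (c : Fin t → ℕ) (hc : ∀ i a, #{r ∈ range (L + 1) | ((r : ℕ) : ZMod (n i)) = a} ≤ c i)
    (hsum : ∑ i, c i ≤ L) :
    IsTotalDomSet (completeProd t n) {y | ∃ r, r ≤ L ∧ y = fun i => (r : ZMod (n i))} := by
  intro v
  obtain ⟨r, hr, hne⟩ := exists_lt_forall_natCast_ne n v
    (((sum_le_sum fun i _ => hc i (v i)).trans hsum).trans_lt (Nat.lt_succ_self L))
  exact ⟨fun i => (r : ZMod (n i)), ⟨r, Nat.le_of_lt_succ hr, rfl⟩,
    fun h => hne ⟨0, ht⟩ (congrFun h _).symm, fun i => (hne i).symm⟩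

theorem stmt2 (t : ℕ) (ht : 3 ≤ t) (n : Fin t → ℕ) (hmono : Monotone n)
    (m : ℕ)
    (hm1 : t + m < n ⟨0, by omega⟩ * (m + 1))
    (hm2 : t + m < n ⟨1, by omega⟩) :
    IsTotalDomSet (completeProd t n)
      {y | ∃ r : ℕ, r ≤ t + m ∧ y = fun i => (r : ZMod (n i))} ∧
    totalDomNum (completeProd t n) ≤ t + m + 1 := by
  set i₀ : Fin t := ⟨0, by omega⟩
  have hcount : ∀ i a, #{r ∈ range (t + m + 1) | ((r : ℕ) : ZMod (n i)) = a} ≤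
      1 + if i = i₀ then m else 0 := by
    intro i a
    by_cases hi : i = i₀
    · subst hi
      simpa [add_comm] using card_filter_natCast_eq_le (Nat.succ_le_of_lt hm1) a
    · have hle : t + m < n i :=
        hm2.trans_le (hmono (Fin.le_def.2 (Nat.one_le_iff_ne_zero.2 fun h => hi (Fin.ext h))))
      simpa [hi] using card_filter_natCast_eq_le (k := n i) (q := 1) (by omega) a
  have hsum : ∑ i, (1 + if i = i₀ then m else 0) ≤ t + m := by
    simp [sum_add_distrib]
  have hdom := isTotalDomSet_completeProd_diagonal (by omega) _ hcount hsum
  exact ⟨hdom, (totalDomNum_le_ncard hdom).trans (ncard_setOf_exists_le_eq_le _ _)⟩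
end

section
/- Let n = p₁^{α₁} p₂^{α₂} p₃^{α₃} where p₁ < p₂ < p₃ are primes and α₁, α₂, α₃ are positive integers with α_j ≥ 2 for some j. Then the domination number of the unitary Cayley graph X_n satisfies γ(X_n) ≥ 3p₁/(p₁-1). -/
/-!
Put `M = p₁ p₂ p₃`. By the Chinese remainder theorem, reduction modulo `M` maps `ℤ/nℤ` onto
`ℤ/p₁ × ℤ/p₂ × ℤ/p₃` with fibres of size `n / M ≥ p₁`, and the images of adjacent vertices differ
in every coordinate, so `X_n` maps into `K_{p₁} × K_{p₂} × K_{p₃}`.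

Let `D` be a dominating set with `|D| ≤ 2p₁ + 1`, fix a residue `r` modulo `p₁` and let `L` be
the set of elements of `D` lying off the slice `x ≡ r (mod p₁)`. If `|L| ≤ 2`, at least `4 - |L|`
points `(r, b, c)` share a coordinate with the image of every element of `D`. No vertex over such
a point has a neighbour in `D`, so all these fibres lie in `D ∖ L`, which is too small to hold
`(4 - |L|) p₁` vertices. Hence at least three elements of `D` lie off every slice, and summing
over the `p₁` slices gives `(p₁ - 1) |D| ≥ 3 p₁`. A larger `D` satisfies this bound anyway.
-/

open Finset

section Board

variable {B C : Type*} [Fintype B] [Fintype C] [DecidableEq B] [DecidableEq C]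

def sharesLineWithAll (P : Finset (B × C)) : Finset (B × C) :=
  {s | ∀ q ∈ P, s.1 = q.1 ∨ s.2 = q.2}

lemma four_le_card_sharesLineWithAll_add_card [Nontrivial B] (hC : 3 ≤ Fintype.card C)
    (P : Finset (B × C)) (hP : #P ≤ 2) : 4 ≤ #(sharesLineWithAll P) + #P := by
  have hB : 2 ≤ Fintype.card B := Fintype.one_lt_card
  have row (b : B) (hb : ∀ q ∈ P, q.1 = b) : 3 ≤ #(sharesLineWithAll P) :=
    calc 3 ≤ #({b} ×ˢ (univ : Finset C)) := by simpa using hC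
      _ ≤ _ := card_le_card fun s hs => by
        simp only [mem_product, mem_singleton] at hs
        simp only [sharesLineWithAll, mem_filter, mem_univ, true_and]
        exact fun q hq => Or.inl (hs.1.trans (hb q hq).symm)
  interval_cases h : #P
  · rw [card_eq_zero.mp h]
    simp only [sharesLineWithAll, notMem_empty, IsEmpty.forall_iff, implies_true, filter_true,
      card_univ, Fintype.card_prod]
    nlinarith
  · obtain ⟨q, rfl⟩ := card_eq_one.mp h
    have := row q.1 (by simp)
    omega
  · obtain ⟨q, q', hqq', rfl⟩ := card_eq_two.mp h
    by_cases h1 : q.1 = q'.1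
    · have := row q.1 (by simp [h1])
      omega
    · have : 2 ≤ #(sharesLineWithAll {q, q'}) :=
        calc 2 = #({(q.1, q'.2), (q'.1, q.2)} : Finset (B × C)) := by
              rw [card_pair (by simp [h1])]
          _ ≤ _ := card_le_card fun s hs => by
            simp only [mem_insert, mem_singleton] at hs
            rcases hs with rfl | rfl <;> simp [sharesLineWithAll]
      omega

end Board

lemma sum_card_filter_ne_add_card {α A : Type*} [Fintype A] [DecidableEq A] (g : α → A)
    (s : Finset α) : ∑ r, #{x ∈ s | g x ≠ r} + #s = Fintype.card A * #s :=
  calc ∑ r, #{x ∈ s | g x ≠ r} + #s = ∑ r, (#{x ∈ s | g x = r} + #{x ∈ s | g x ≠ r}) := by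
        rw [sum_add_distrib, ← card_eq_sum_card_fiberwise fun _ _ => mem_univ _, add_comm]
    _ = ∑ _r : A, #s := sum_congr rfl fun _ _ => card_filter_add_card_filter_not _
    _ = Fintype.card A * #s := by rw [sum_const, card_univ, smul_eq_mul]

lemma IsDomSet.mem_of_forall_not_adj {V : Type*} {G : SimpleGraph V} {D : Set V}
    (hD : IsDomSet G D) {v : V} (hv : ∀ d ∈ D, ¬ G.Adj v d) : v ∈ D :=
  (hD v).resolve_right fun ⟨d, hd, hvd⟩ => hv d hd hvd

lemma exists_isDomSet_ncard_eq_domNum {V : Type*} [Finite V] (G : SimpleGraph V) :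
    ∃ D : Set V, IsDomSet G D ∧ D.ncard = domNum G :=
  Nat.sInf_mem (s := {k | ∃ D : Set V, IsDomSet G D ∧ D.ncard = k})
    ⟨_, Set.univ, fun _ => Or.inl trivial, rfl⟩

section ProductOfThreeCompleteGraphs

variable {V A B C : Type*} [Fintype V] [DecidableEq A] [DecidableEq B] [DecidableEq C]
  {G : SimpleGraph V}
  (f : G →g directProd (⊤ : SimpleGraph A) (directProd (⊤ : SimpleGraph B) (⊤ : SimpleGraph C)))

lemma three_le_card_filter_fst_ne [Fintype B] [Fintype C] [Nontrivial B]
    (hC : 3 ≤ Fintype.card C) {m : ℕ} (hm : 0 < m) (hfib : ∀ t, m ≤ #{v | f v = t})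
    {D : Finset V} (hD : IsDomSet G D) (hDm : #D ≤ 2 * m + 1) (r : A) :
    3 ≤ #{d ∈ D | (f d).1 ≠ r} := by
  set L := {d ∈ D | (f d).1 ≠ r}
  by_contra! hL
  set P := L.image fun d => (f d).2
  set T := sharesLineWithAll P
  have hPL : #P ≤ #L := card_image_le
  have hT : 4 ≤ #T + #P := four_le_card_sharesLineWithAll_add_card hC P (by omega)
  have hcover : ({v | (f v).1 = r ∧ (f v).2 ∈ T} : Finset V) ⊆ {d ∈ D | (f d).1 = r} := by
    intro v hv
    simp only [mem_filter, mem_univ, true_and] at hv ⊢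
    refine ⟨hD.mem_of_forall_not_adj fun d hd hvd => ?_, hv.1⟩
    obtain ⟨h1, h2, h3⟩ := f.map_adj hvd
    have hdL : d ∈ L := mem_filter.mpr ⟨hd, fun hdr => h1 (hv.1.trans hdr.symm)⟩
    have := (mem_filter.mp hv.2).2 (f d).2 (mem_image_of_mem _ hdL)
    simp_all
  have hcount : m * #T ≤ #{v | (f v).1 = r ∧ (f v).2 ∈ T} :=
    mul_card_image_le_card_of_maps_to (f := fun v => (f v).2) (fun v hv => (mem_filter.mp hv).2.2)
      m fun s hs => (hfib (r, s)).trans (card_le_card fun v hv => by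
        rw [mem_filter] at hv ⊢
        simp only [mem_filter, mem_univ, hv.2, hs, and_self])
  have hsplit : #{d ∈ D | (f d).1 = r} + #L = #D :=
    card_filter_add_card_filter_not (fun d => (f d).1 = r)
  have := card_le_card hcover
  have := Nat.mul_le_mul_left m (show 4 - #L ≤ #T by omega)
  interval_cases #L <;> omega

theorem three_mul_card_le_card_mul_of_isDomSet [Fintype A] [Fintype B] [Fintype C]
    [Nontrivial B] (hC : 3 ≤ Fintype.card C) (hA : 2 ≤ Fintype.card A) {m : ℕ}
    (hAm : Fintype.card A ≤ m) (hfib : ∀ t, m ≤ #{v | f v = t}) {D : Finset V}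
    (hD : IsDomSet G D) : 3 * Fintype.card A ≤ #D * (Fintype.card A - 1) := by
  obtain ⟨a, ha⟩ : ∃ a, Fintype.card A = a + 2 := ⟨_, (Nat.sub_add_cancel hA).symm⟩
  rw [ha, show a + 2 - 1 = a + 1 by omega]
  rcases le_or_gt #D (2 * m + 1) with hDm | hDm
  · have hsum := sum_card_filter_ne_add_card (fun v => (f v).1) D
    have hthree : ∑ _r : A, 3 ≤ ∑ r, #{d ∈ D | (f d).1 ≠ r} :=
      sum_le_sum fun r _ => three_le_card_filter_fst_ne f hC (by omega) hfib hD hDm r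
    rw [sum_const, card_univ, smul_eq_mul, ha] at hthree
    rw [ha] at hsum
    nlinarith
  · nlinarith

end ProductOfThreeCompleteGraphs

lemma RingHom.ne_of_isUnit_sub {R S : Type*} [Ring R] [Ring S] [Nontrivial S] (φ : R →+* S)
    {x y : R} (h : IsUnit (x - y)) : φ x ≠ φ y := fun hxy => by
  simpa [hxy] using h.map φ

def unitaryCayleyHom {n : ℕ} {A B C : Type*} [Ring A] [Ring B] [Ring C] [Nontrivial A]
    [Nontrivial B] [Nontrivial C] (π : ZMod n →+* A × B × C) :
    unitaryCayley n →g
      directProd (⊤ : SimpleGraph A) (directProd (⊤ : SimpleGraph B) (⊤ : SimpleGraph C)) where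
  toFun := π
  map_rel' := fun ⟨_, hu⟩ =>
    ⟨((RingHom.fst _ _).comp π).ne_of_isUnit_sub hu,
      (((RingHom.fst _ _).comp (RingHom.snd _ _)).comp π).ne_of_isUnit_sub hu,
      (((RingHom.snd _ _).comp (RingHom.snd _ _)).comp π).ne_of_isUnit_sub hu⟩

lemma AddMonoidHom.card_fiber_mul_card_eq {G H F : Type*} [AddGroup G] [Fintype G] [AddMonoid H]
    [Fintype H] [DecidableEq H] [FunLike F G H] [AddMonoidHomClass F G H] (f : F)
    (hf : Function.Surjective f) (t : H) :
    #{g | f g = t} * Fintype.card H = Fintype.card G :=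
  calc #{g | f g = t} * Fintype.card H = ∑ s : H, #{g | f g = s} := by
        rw [sum_congr rfl fun s _ => card_fiber_eq_of_mem_range f (hf s) (hf t), sum_const,
          card_univ, smul_eq_mul, mul_comm]
    _ = Fintype.card G := (card_eq_sum_card_fiberwise fun _ _ => mem_univ _).symm

def ZMod.castHomProd {n a b c : ℕ} (hab : a.Coprime (b * c)) (hbc : b.Coprime c)
    (h : a * (b * c) ∣ n) : ZMod n →+* ZMod a × ZMod b × ZMod c :=
  ((ZMod.chineseRemainder hab).trans
    ((RingEquiv.refl _).prodCongr (ZMod.chineseRemainder hbc))).toRingHom.comp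
    (ZMod.castHom h _)

lemma ZMod.castHomProd_surjective {n a b c : ℕ} (hab : a.Coprime (b * c)) (hbc : b.Coprime c)
    (h : a * (b * c) ∣ n) : Function.Surjective (ZMod.castHomProd hab hbc h) := by
  rw [ZMod.castHomProd, RingHom.coe_comp]
  exact (RingEquiv.surjective _).comp (ZMod.castHom_surjective h)

theorem three_mul_le_domNum_unitaryCayley_mul {n a b c : ℕ} (ha : 2 ≤ a) (hb : 2 ≤ b)
    (hc : 3 ≤ c) (hab : a.Coprime (b * c)) (hbc : b.Coprime c) (hdvd : a * (b * c) ∣ n)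
    (hle : a * (a * (b * c)) ≤ n) :
    3 * a ≤ domNum (unitaryCayley n) * (a - 1) := by
  classical
  have : NeZero n := ⟨(lt_of_lt_of_le (by positivity) hle).ne'⟩
  have : NeZero a := ⟨by omega⟩
  have : NeZero b := ⟨by omega⟩
  have : NeZero c := ⟨by omega⟩
  have : Fact (1 < a) := ⟨by omega⟩
  have : Fact (1 < b) := ⟨by omega⟩
  have : Fact (1 < c) := ⟨by omega⟩
  set π := ZMod.castHomProd hab hbc hdvd
  have hfib (t) : a ≤ #{x | π x = t} := by
    have := AddMonoidHom.card_fiber_mul_card_eq π (ZMod.castHomProd_surjective hab hbc hdvd) t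
    simp only [Fintype.card_prod, ZMod.card] at this
    exact Nat.le_of_mul_le_mul_right (this ▸ hle) (by positivity)
  obtain ⟨D, hD, hDcard⟩ := exists_isDomSet_ncard_eq_domNum (unitaryCayley n)
  have := three_mul_card_le_card_mul_of_isDomSet (unitaryCayleyHom π) (by simpa using hc)
    (by simpa using ha) (by simp) hfib (D := D.toFinset) (by simpa using hD)
  rwa [ZMod.card, ← Set.ncard_eq_toFinset_card', hDcard] at this

lemma mul_mul_mul_le_pow_mul_pow_mul_pow {p q r α β γ : ℕ} (hp : 0 < p) (hpq : p ≤ q)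
    (hqr : q ≤ r) (hα : α ≠ 0) (hβ : β ≠ 0) (hγ : γ ≠ 0) (h : 2 ≤ α ∨ 2 ≤ β ∨ 2 ≤ γ) :
    p * (p * (q * r)) ≤ p ^ α * q ^ β * r ^ γ := by
  have hq : 0 < q := hp.trans_le hpq
  have hr : 0 < r := hq.trans_le hqr
  rcases h with h | h | h
  · calc p * (p * (q * r)) = p ^ 2 * q * r := by ring
      _ ≤ p ^ α * q ^ β * r ^ γ := by
        gcongr
        exacts [Nat.le_self_pow hβ q, Nat.le_self_pow hγ r]
  · calc p * (p * (q * r)) ≤ p * (q * (q * r)) := by gcongr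
      _ = p * q ^ 2 * r := by ring
      _ ≤ p ^ α * q ^ β * r ^ γ := by
        gcongr
        exacts [Nat.le_self_pow hα p, Nat.le_self_pow hγ r]
  · calc p * (p * (q * r)) ≤ p * (r * (q * r)) := by gcongr; omega
      _ = p * q * r ^ 2 := by ring
      _ ≤ p ^ α * q ^ β * r ^ γ := by
        gcongr
        exacts [Nat.le_self_pow hα p, Nat.le_self_pow hβ q]

theorem stmt8 (p₁ p₂ p₃ α₁ α₂ α₃ n : ℕ)
    (hp₁ : p₁.Prime) (hp₂ : p₂.Prime) (hp₃ : p₃.Prime)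
    (h12 : p₁ < p₂) (h23 : p₂ < p₃)
    (hα₁ : 0 < α₁) (hα₂ : 0 < α₂) (hα₃ : 0 < α₃)
    (hα : 2 ≤ α₁ ∨ 2 ≤ α₂ ∨ 2 ≤ α₃)
    (hn : n = p₁ ^ α₁ * p₂ ^ α₂ * p₃ ^ α₃) :
    (3 * p₁ : ℝ) / (p₁ - 1) ≤ (domNum (unitaryCayley n) : ℝ) := by
  have hcop₂₃ : p₂.Coprime p₃ := (Nat.coprime_primes hp₂ hp₃).mpr h23.ne
  have hcop₁ : p₁.Coprime (p₂ * p₃) :=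
    ((Nat.coprime_primes hp₁ hp₂).mpr h12.ne).mul_right
      ((Nat.coprime_primes hp₁ hp₃).mpr (h12.trans h23).ne)
  have hdvd : p₁ * (p₂ * p₃) ∣ n := by
    rw [hn, mul_assoc]
    exact mul_dvd_mul (dvd_pow_self _ hα₁.ne') (mul_dvd_mul (dvd_pow_self _ hα₂.ne')
      (dvd_pow_self _ hα₃.ne'))
  have hle : p₁ * (p₁ * (p₂ * p₃)) ≤ n := hn ▸ mul_mul_mul_le_pow_mul_pow_mul_pow hp₁.pos h12.le
    h23.le hα₁.ne' hα₂.ne' hα₃.ne' hα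
  have key := three_mul_le_domNum_unitaryCayley_mul hp₁.two_le hp₂.two_le
    (by linarith [hp₁.two_le]) hcop₁ hcop₂₃ hdvd hle
  have hp₁_sub : ((p₁ - 1 : ℕ) : ℝ) = p₁ - 1 := by rw [Nat.cast_sub hp₁.one_le, Nat.cast_one]
  rw [div_le_iff₀ (by linarith [show (2 : ℝ) ≤ p₁ by exact_mod_cast hp₁.two_le]), ← hp₁_sub]
  exact_mod_cast key
end

section
/- If n has at most 3 distinct prime factors and n is not squarefree, then γ(X_n) = g(n), where X_n is the unitary Cayley graph of ℤ/nℤ and g is Jacobsthal's function. -/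
/-!
The set `{0, …, g(n) - 1}` dominates `X_n`, so `γ(X_n) ≤ g(n)`.

Conversely, `x` and `x + rad n` are distinct non-adjacent twins of `X_n` when `n` is not
squarefree, which turns a dominating set of `X_n` into a total dominating set `T` of `X_{rad n}`
that is no larger. A vertex `y` has no neighbour in `T` exactly when every `t ∈ T` agrees with `y`
modulo some prime of `n`; by the Chinese remainder theorem such a `y` exists as soon as all but
fewer than `ω(n)` elements of `T` lie in one class modulo a prime `q ∣ n`. Hence
`|T| ≥ ω(n) + |T| / q`. For `ω(n) ≤ 3`, taking `q = 2`, `q = 3` or any `q` according to which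
small primes divide `n`, this bound equals a length `L` such that every `L` consecutive integers
contain one coprime to `n`, which follows by counting how many of them each prime can divide.
-/

open Finset

lemma isCoprime_iff_forall_primeFactors {m : ℕ} (hm : m ≠ 0) (z : ℤ) :
    IsCoprime z m ↔ ∀ p ∈ m.primeFactors, ¬ (p : ℤ) ∣ z := by
  rw [Int.isCoprime_iff_nat_coprime, Int.natAbs_natCast]
  constructor
  · intro h p hp hpz
    exact Nat.Prime.not_coprime_iff_dvd.mpr ⟨p, Nat.prime_of_mem_primeFactors hp,
      Int.natCast_dvd.mp hpz, Nat.dvd_of_mem_primeFactors hp⟩ h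
  · intro h
    exact Nat.coprime_of_dvd fun k hk hkz hkm =>
      h k (Nat.mem_primeFactors.mpr ⟨hk, hkm, hm⟩) (Int.natCast_dvd.mpr hkz)

lemma isUnit_intCast_iff_forall_primeFactors {m : ℕ} (hm : m ≠ 0) (z : ℤ) :
    IsUnit (z : ZMod m) ↔ ∀ p ∈ m.primeFactors, ¬ (p : ℤ) ∣ z := by
  rw [ZMod.coe_int_isUnit_iff_isCoprime, isCoprime_comm, isCoprime_iff_forall_primeFactors hm]

lemma isUnit_intCast_iff_gcd_eq_one {m : ℕ} (z : ℤ) : IsUnit (z : ZMod m) ↔ Int.gcd z m = 1 := by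
  rw [ZMod.coe_int_isUnit_iff_isCoprime, isCoprime_comm, Int.isCoprime_iff_gcd_eq_one]

lemma unitaryCayley_adj_iff {m : ℕ} [Nontrivial (ZMod m)] {x y : ZMod m} :
    (unitaryCayley m).Adj x y ↔ IsUnit (x - y) :=
  ⟨And.right, fun h => ⟨fun hxy => by simp [hxy] at h, h⟩⟩

lemma domNum_le_card {V : Type*} {G : SimpleGraph V} (D : Finset V) (hD : IsDomSet G D) :
    domNum G ≤ #D :=
  Nat.sInf_le ⟨D, hD, Set.ncard_coe_finset D⟩

lemma le_domNum_of_forall {V : Type*} [Finite V] {G : SimpleGraph V} {L : ℕ}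
    (h : ∀ D : Finset V, IsDomSet G D → L ≤ #D) : L ≤ domNum G := by
  classical
  have := Fintype.ofFinite V
  refine le_csInf ⟨_, Set.univ, fun _ => Or.inl trivial, rfl⟩ ?_
  rintro k ⟨D, hD, rfl⟩
  simpa [Set.ncard_eq_toFinset_card'] using h D.toFinset (by simpa using hD)

lemma domNum_le_jacobsthal {n : ℕ} (hn : n ≠ 0) :
    domNum (unitaryCayley n) ≤ jacobsthal n := by
  classical
  have : NeZero n := ⟨hn⟩
  have hn' : (0 : ℤ) < n := by exact_mod_cast Nat.pos_of_ne_zero hn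
  obtain ⟨-, hwin⟩ :
      jacobsthal n ∈ {m | 0 < m ∧ ∀ x : ℤ, ∃ i : ℕ, i < m ∧ Int.gcd (x + i) n = 1} :=
    Nat.sInf_mem ⟨n, Nat.pos_of_ne_zero hn, fun x => by
      -- `x + i ≡ 1 (mod n)`
      have h0 := Int.emod_nonneg (1 - x) hn'.ne'
      refine ⟨((1 - x) % n).toNat, by have := Int.emod_lt_of_pos (1 - x) hn'; omega, ?_⟩
      rw [← isUnit_intCast_iff_gcd_eq_one]
      simp [Int.toNat_of_nonneg h0, ZMod.intCast_mod]⟩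
  refine (domNum_le_card ((range (jacobsthal n)).image fun i : ℕ => (i : ZMod n))
    fun v => ?_).trans (card_image_le.trans (card_range _).le)
  obtain ⟨i, hi, hgcd⟩ := hwin (-(v.val : ℤ))
  have hvi : IsUnit (v - i) := by
    rw [← isUnit_intCast_iff_gcd_eq_one] at hgcd
    simpa [neg_add_eq_sub] using hgcd.neg
  have hiD : (i : ZMod n) ∈ (range (jacobsthal n)).image fun i : ℕ => (i : ZMod n) :=
    mem_image_of_mem _ (mem_range.mpr hi)
  by_cases hv : v = i
  · exact Or.inl (hv ▸ hiD)
  · exact Or.inr ⟨i, hiD, hv, hvi⟩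

lemma card_image_add_card_image_le {α β : Type*} [DecidableEq β] {f : α → β} {s t : Finset α}
    (hts : t ⊆ s) (h : ∀ a ∈ t, ∃ b ∈ s, b ≠ a ∧ f b = f a) :
    #(s.image f) + #(t.image f) ≤ #s := by
  classical
  calc #(s.image f) + #(t.image f)
      = ∑ y ∈ s.image f, (1 + if y ∈ t.image f then 1 else 0) := by
        rw [sum_add_distrib, sum_boole, filter_mem_eq_inter,
          inter_eq_right.mpr (image_subset_image hts)]
        simp
    _ ≤ ∑ y ∈ s.image f, #{a ∈ s | f a = y} := sum_le_sum fun y hy => by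
        split_ifs with hyt
        · obtain ⟨a, ha, rfl⟩ := mem_image.mp hyt
          obtain ⟨b, hb, hba, hfb⟩ := h a ha
          calc 1 + 1 = #{b, a} := (card_pair hba).symm
            _ ≤ _ := card_le_card (by simp [insert_subset_iff, hb, hts ha, hfb])
        · obtain ⟨a, ha, rfl⟩ := mem_image.mp hy
          exact card_pos.mpr ⟨a, mem_filter.mpr ⟨ha, rfl⟩⟩
    _ = #s := (card_eq_sum_card_image f s).symm

def rad (n : ℕ) : ℕ := ∏ p ∈ n.primeFactors, p

lemma rad_dvd (n : ℕ) : rad n ∣ n := Nat.prod_primeFactors_dvd n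

lemma primeFactors_rad (n : ℕ) : (rad n).primeFactors = n.primeFactors :=
  Nat.primeFactors_prod_primeFactors n

lemma rad_ne_zero (n : ℕ) : rad n ≠ 0 :=
  prod_ne_zero_iff.mpr fun _ hp => (Nat.prime_of_mem_primeFactors hp).ne_zero

lemma squarefree_rad (n : ℕ) : Squarefree (rad n) := by
  refine Finset.squarefree_prod_of_pairwise_isCoprime (fun p hp q hq hpq => ?_)
    fun _ hp => (Nat.prime_of_mem_primeFactors hp).squarefree
  simp only [Function.onFun, ← Nat.coprime_iff_isRelPrime]
  exact (Nat.coprime_primes (Nat.prime_of_mem_primeFactors hp)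
    (Nat.prime_of_mem_primeFactors hq)).mpr hpq

lemma natCast_rad_ne_zero {n : ℕ} [NeZero n] (hsq : ¬ Squarefree n) : (rad n : ZMod n) ≠ 0 := by
  rw [Ne, ZMod.natCast_eq_zero_iff]
  exact fun h => hsq (Nat.dvd_antisymm (rad_dvd n) h ▸ squarefree_rad n)

lemma isUnit_castHom_rad_iff {n : ℕ} (hn : n ≠ 0) (a : ZMod n) :
    IsUnit (ZMod.castHom (rad_dvd n) (ZMod (rad n)) a) ↔ IsUnit a := by
  obtain ⟨z, rfl⟩ := ZMod.intCast_surjective a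
  rw [map_intCast, isUnit_intCast_iff_forall_primeFactors (rad_ne_zero n),
    isUnit_intCast_iff_forall_primeFactors hn, primeFactors_rad]

/-- Vertices `x` and `x + rad n` of `X_n` are distinct twins. A vertex of `D` without a neighbour
in `D` forces its whole class modulo `rad n` into `D`; such a class thus carries two elements of
`D`, one of which is traded for a neighbouring class of `X_{rad n}`. -/
theorem exists_isTotalDomSet_rad_card_le {n : ℕ} (hn : n ≠ 0) (hsq : ¬ Squarefree n)
    {D : Finset (ZMod n)} (hD : IsDomSet (unitaryCayley n) D) :
    ∃ T : Finset (ZMod (rad n)), IsTotalDomSet (unitaryCayley (rad n)) T ∧ #T ≤ #D := by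
  classical
  have : NeZero n := ⟨hn⟩
  have : Nontrivial (ZMod (rad n)) := ZMod.nontrivial_iff.mpr fun h => by
    have := primeFactors_rad n
    rw [h, Nat.primeFactors_one, eq_comm, Nat.primeFactors_eq_empty] at this
    exact hsq (this.resolve_left hn ▸ squarefree_one)
  set π := ZMod.castHom (rad_dvd n) (ZMod (rad n))
  have hπ : ∀ a, IsUnit (π a) ↔ IsUnit a := isUnit_castHom_rad_iff hn
  set I := D.filter fun d => ∀ e ∈ D, ¬ IsUnit (d - e)
  have hclass : ∀ d ∈ I, ∀ z, π z = π d → z ∈ D := by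
    intro d hd z hz
    refine (hD z).resolve_right fun ⟨e, he, hze⟩ => (mem_filter.mp hd).2 e he ?_
    rw [← hπ, map_sub, ← hz, ← map_sub, hπ]
    exact hze.2
  refine ⟨D.image π ∪ (I.image π).image (· + 1), fun y => ?_, ?_⟩
  · obtain ⟨x, rfl⟩ := ZMod.castHom_surjective (rad_dvd n) y
    by_cases hx : ∃ e ∈ D, IsUnit (x - e)
    · obtain ⟨e, he, hxe⟩ := hx
      exact ⟨π e, mem_union_left _ (mem_image_of_mem _ he),
        unitaryCayley_adj_iff.mpr (by rwa [← map_sub, hπ])⟩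
    · push Not at hx
      have hxD : x ∈ D := (hD x).resolve_right fun ⟨e, he, hxe⟩ => hx e he hxe.2
      refine ⟨π x + 1, mem_union_right _ (mem_image_of_mem _ (mem_image_of_mem _
        (mem_filter.mpr ⟨hxD, hx⟩))),
        unitaryCayley_adj_iff.mpr (by rw [sub_add_cancel_left]; exact isUnit_one.neg)⟩
  · calc #(D.image π ∪ (I.image π).image (· + 1))
        ≤ #(D.image π) + #(I.image π) :=
          (card_union_le _ _).trans (Nat.add_le_add_left card_image_le _)
      _ ≤ #D := card_image_add_card_image_le (filter_subset _ _) fun d hd =>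
          ⟨d + rad n, hclass d hd _ (by simp), by simpa using natCast_rad_ne_zero hsq, by simp⟩

lemma IsCoprime.exists_dvd_sub_and_dvd_sub {R : Type*} [CommRing R] {a b : R}
    (h : IsCoprime a b) (u v : R) :
    ∃ y, a ∣ y - u ∧ b ∣ y - v := by
  obtain ⟨s, t, hst⟩ := h
  exact ⟨u * t * b + v * s * a, ⟨(v - u) * s, by linear_combination u * hst⟩,
    ⟨(u - v) * t, by linear_combination v * hst⟩⟩

lemma exists_dvd_sub_and_forall_dvd_sub {P : Finset ℕ} (hP : ∀ p ∈ P, p.Prime) {q : ℕ}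
    (hq : q.Prime) (hqP : q ∉ P) (c y₀ : ℤ) :
    ∃ y, (q : ℤ) ∣ y - c ∧ ∀ p ∈ P, (p : ℤ) ∣ y - y₀ := by
  have hcop : IsCoprime (q : ℤ) (∏ p ∈ P, (p : ℤ)) := IsCoprime.prod_right fun p hp =>
    Nat.isCoprime_iff_coprime.mpr ((Nat.coprime_primes hq (hP p hp)).mpr fun h => hqP (h ▸ hp))
  obtain ⟨y, hyc, hy⟩ := hcop.exists_dvd_sub_and_dvd_sub c y₀
  exact ⟨y, hyc, fun p hp => (dvd_prod_of_mem _ hp).trans hy⟩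

lemma exists_forall_dvd_sub_insert {P : Finset ℕ} (hP : ∀ p ∈ P, p.Prime) {q : ℕ}
    (hq : q.Prime) (hqP : q ∉ P) (c : ℤ) {T : Finset ℤ}
    (h : ∃ y₀, ∀ t ∈ T, ¬ (q : ℤ) ∣ t - c → ∃ p ∈ P, (p : ℤ) ∣ y₀ - t) :
    ∃ y, ∀ t ∈ T, ∃ p ∈ insert q P, (p : ℤ) ∣ y - t := by
  obtain ⟨y₀, hy₀⟩ := h
  obtain ⟨y, hyc, hy⟩ := exists_dvd_sub_and_forall_dvd_sub hP hq hqP c y₀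
  refine ⟨y, fun t ht => ?_⟩
  by_cases htc : (q : ℤ) ∣ t - c
  · exact ⟨q, mem_insert_self _ _, by simpa using dvd_sub hyc htc⟩
  · obtain ⟨p, hp, hpt⟩ := hy₀ t ht htc
    exact ⟨p, mem_insert_of_mem hp, by simpa using dvd_add (hy p hp) hpt⟩

lemma exists_forall_dvd_sub_of_card_le {P : Finset ℕ} (hP : ∀ p ∈ P, p.Prime) (T : Finset ℤ)
    (hT : #T ≤ #P) : ∃ y, ∀ t ∈ T, ∃ p ∈ P, (p : ℤ) ∣ y - t := by
  induction P using Finset.induction_on generalizing T with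
  | empty => exact ⟨0, fun t ht => absurd (card_pos.mpr ⟨t, ht⟩) (by simpa using hT)⟩
  | insert q P hqP ih =>
    obtain rfl | ⟨t₀, ht₀⟩ := T.eq_empty_or_nonempty
    · exact ⟨0, by simp⟩
    have hP' : ∀ p ∈ P, p.Prime := fun p hp => hP p (mem_insert_of_mem hp)
    refine exists_forall_dvd_sub_insert hP' (hP q (mem_insert_self _ _)) hqP t₀ ?_
    obtain ⟨y₀, hy₀⟩ := ih hP' ((T.erase t₀).filter fun t => ¬ (q : ℤ) ∣ t - t₀)
      ((card_filter_le _ _).trans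
        (by rw [card_erase_of_mem ht₀]; rw [card_insert_of_notMem hqP] at hT; omega))
    exact ⟨y₀, fun t ht htc => hy₀ t (mem_filter.mpr ⟨mem_erase.mpr
      ⟨fun h => htc (by simp [h]), ht⟩, htc⟩)⟩

lemma exists_forall_dvd_sub_of_card_filter_lt {P : Finset ℕ} (hP : ∀ p ∈ P, p.Prime) {q : ℕ}
    (hq : q ∈ P) (c : ℤ) (T : Finset ℤ) (hT : #(T.filter fun t => ¬ (q : ℤ) ∣ t - c) < #P) :
    ∃ y, ∀ t ∈ T, ∃ p ∈ P, (p : ℤ) ∣ y - t := by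
  have hP' : ∀ p ∈ P.erase q, p.Prime := fun p hp => hP p (mem_of_mem_erase hp)
  rw [← insert_erase hq]
  refine exists_forall_dvd_sub_insert hP' (hP q hq) (notMem_erase q P) c ?_
  obtain ⟨y₀, hy₀⟩ := exists_forall_dvd_sub_of_card_le hP' (T.filter fun t => ¬ (q : ℤ) ∣ t - c)
    (by rw [card_erase_of_mem hq]; omega)
  exact ⟨y₀, fun t ht htc => hy₀ t (mem_filter.mpr ⟨ht, htc⟩)⟩

lemma card_primeFactors_le_card_filter {m : ℕ} [NeZero m] {T : Finset (ZMod m)}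
    (hT : IsTotalDomSet (unitaryCayley m) T) {q : ℕ} (hq : q ∈ m.primeFactors) (c : ℤ) :
    #m.primeFactors ≤ #(T.filter fun t => ¬ (q : ℤ) ∣ t.val - c) := by
  by_contra! h
  obtain ⟨y, hy⟩ := exists_forall_dvd_sub_of_card_filter_lt
    (fun p hp => Nat.prime_of_mem_primeFactors hp) hq c (T.image fun t => (t.val : ℤ))
    (by rw [filter_image]; exact card_image_le.trans_lt h)
  obtain ⟨t, ht, -, hu⟩ := hT (y : ZMod m)
  obtain ⟨p, hp, hpy⟩ := hy _ (mem_image_of_mem _ ht)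
  rw [show (y : ZMod m) - t = ((y - t.val : ℤ) : ZMod m) by simp,
    isUnit_intCast_iff_forall_primeFactors (NeZero.ne m)] at hu
  exact hu p hp hpy

/-- `k` is the size of a largest class of `T` modulo `q`. Outside it lie at least `ω(m)`
elements of `T`: fewer could, by the Chinese remainder theorem, all be matched modulo distinct
primes by one vertex, which would then have no neighbour in `T`. -/
lemma exists_card_le_mul_and_card_primeFactors_add_le {m : ℕ} [NeZero m] {T : Finset (ZMod m)}
    (hT : IsTotalDomSet (unitaryCayley m) T) {q : ℕ} (hq : q ∈ m.primeFactors) :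
    ∃ k, #T ≤ q * k ∧ #m.primeFactors + k ≤ #T := by
  have hq0 : (0 : ℚ) < q := by exact_mod_cast (Nat.prime_of_mem_primeFactors hq).pos
  have : NeZero q := ⟨(Nat.prime_of_mem_primeFactors hq).ne_zero⟩
  obtain ⟨c, -, hc⟩ := exists_le_card_fiber_of_nsmul_le_card_of_maps_to
    (f := fun t : ZMod m => ((t.val : ℤ) : ZMod q)) (fun _ _ => mem_univ _) univ_nonempty
    (b := (#T / q : ℚ)) (by rw [card_univ, ZMod.card, nsmul_eq_mul]; field_simp; rfl)
  have hfib : ∀ t : ZMod m, ((t.val : ℤ) : ZMod q) = c ↔ (q : ℤ) ∣ t.val - c.cast := fun t => by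
    rw [← ZMod.intCast_eq_intCast_iff_dvd_sub, ZMod.intCast_zmod_cast, eq_comm]
  simp_rw [hfib] at hc
  refine ⟨#(T.filter fun t => (q : ℤ) ∣ t.val - c.cast), ?_, ?_⟩
  · rw [div_le_iff₀ hq0] at hc
    exact_mod_cast (mul_comm (q : ℚ) _ ▸ hc)
  · have := card_primeFactors_le_card_filter hT hq c.cast
    have := card_filter_add_card_filter_not (s := T) fun t => (q : ℤ) ∣ t.val - c.cast
    omega

lemma le_domNum_unitaryCayley {n : ℕ} (hn : n ≠ 0) (hsq : ¬ Squarefree n) {q L : ℕ}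
    (hq : q ∈ n.primeFactors) (hL : ∀ k l, k ≤ q * l → #n.primeFactors + l ≤ k → L ≤ k) :
    L ≤ domNum (unitaryCayley n) := by
  have : NeZero n := ⟨hn⟩
  have : NeZero (rad n) := ⟨rad_ne_zero n⟩
  refine le_domNum_of_forall fun D hD => ?_
  obtain ⟨T, hT, hTD⟩ := exists_isTotalDomSet_rad_card_le hn hsq hD
  obtain ⟨k, hk, hωk⟩ :=
    exists_card_le_mul_and_card_primeFactors_add_le hT (q := q) (by rwa [primeFactors_rad])
  rw [primeFactors_rad] at hωk
  exact (hL _ _ hk hωk).trans hTD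

lemma jacobsthal_le_of_forall {m L : ℕ} (hm : m ≠ 0) (hL : 0 < L)
    (h : ∀ x : ℤ, ∃ i : ℕ, i < L ∧ ∀ p ∈ m.primeFactors, ¬ (p : ℤ) ∣ x + i) :
    jacobsthal m ≤ L := by
  refine Nat.sInf_le ⟨hL, fun x => ?_⟩
  obtain ⟨i, hi, hcop⟩ := h x
  exact ⟨i, hi,
    Int.isCoprime_iff_gcd_eq_one.mp ((isCoprime_iff_forall_primeFactors hm _).mpr hcop)⟩

lemma exists_forall_not_dvd_of_card_lt {ι : Type*} [DecidableEq ι] (W : Finset ι) (f : ι → ℤ)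
    (P : Finset ℕ) (hsep : ∀ p ∈ P, ∀ i ∈ W, ∀ j ∈ W, (p : ℤ) ∣ f i → (p : ℤ) ∣ f j → i = j)
    (hcard : #P < #W) : ∃ i ∈ W, ∀ p ∈ P, ¬ (p : ℤ) ∣ f i := by
  by_contra! h
  choose! g hgP hg using h
  obtain ⟨i, hi, j, hj, hij, hgij⟩ := exists_ne_map_eq_of_card_lt_of_maps_to hcard hgP
  exact hij (hsep _ (hgP i hi) i hi j hj (hg i hi) (hgij ▸ hg j hj))

lemma eq_of_dvd_sub_of_lt {p i j : ℕ} (h : (p : ℤ) ∣ (i : ℤ) - j) (hij : i < j + p)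
    (hji : j < i + p) : i = j := by
  have := Int.eq_zero_of_abs_lt_dvd h (abs_sub_lt_iff.mpr ⟨by omega, by omega⟩)
  omega

lemma eq_of_dvd_add_of_dvd_add {p : ℕ} {x : ℤ} {i j : ℕ} (hi : (p : ℤ) ∣ x + i)
    (hj : (p : ℤ) ∣ x + j) (hij : i < j + p) (hji : j < i + p) : i = j :=
  eq_of_dvd_sub_of_lt (by simpa using dvd_sub hi hj) hij hji

lemma exists_window_of_forall_card_lt (P : Finset ℕ) (hP : ∀ p ∈ P, #P < p) (x : ℤ) :
    ∃ i : ℕ, i < #P + 1 ∧ ∀ p ∈ P, ¬ (p : ℤ) ∣ x + i := by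
  obtain ⟨i, hi, h⟩ := exists_forall_not_dvd_of_card_lt (range (#P + 1)) (fun i => x + i) P
    (fun p hp i hi j hj => by
      have := hP p hp; simp only [mem_range] at hi hj
      exact fun hpi hpj => eq_of_dvd_add_of_dvd_add hpi hpj (by omega) (by omega))
    (by simp)
  exact ⟨i, mem_range.mp hi, h⟩

lemma exists_window_of_two_mem (P : Finset ℕ) (hP : ∀ p ∈ P, p.Prime) (h2 : 2 ∈ P)
    (hodd : ∀ p ∈ P, p ≠ 2 → #P ≤ p) (x : ℤ) :
    ∃ i : ℕ, i < 2 * #P ∧ ∀ p ∈ P, ¬ (p : ℤ) ∣ x + i := by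
  obtain ⟨a, ha, hxa⟩ : ∃ a : ℕ, a < 2 ∧ Odd (x + a) := by
    rcases Int.even_or_odd x with h | h
    exacts [⟨1, by norm_num, by simpa using h.add_one⟩, ⟨0, by norm_num, by simpa using h⟩]
  obtain ⟨k, hk, h⟩ := exists_forall_not_dvd_of_card_lt (range #P) (fun k : ℕ => x + a + 2 * k)
    (P.erase 2) (fun p hp k hk l hl hpk hpl => by
      obtain ⟨hp2, hpP⟩ := mem_erase.mp hp
      have hp : Prime (p : ℤ) := Nat.prime_iff_prime_int.mp (hP p hpP)
      have hpd : (p : ℤ) ∣ 2 * ((k : ℤ) - l) := by simpa [mul_sub] using dvd_sub hpk hpl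
      have hp2' : ¬ (p : ℤ) ∣ 2 := fun h => hp2
        ((Nat.prime_dvd_prime_iff_eq (hP p hpP) Nat.prime_two).mp (by exact_mod_cast h))
      have := hodd p hpP hp2; simp only [mem_range] at hk hl
      exact eq_of_dvd_sub_of_lt ((hp.dvd_or_dvd hpd).resolve_left hp2') (by omega) (by omega))
    (by rw [card_erase_of_mem h2, card_range]; exact Nat.sub_lt (card_pos.mpr ⟨2, h2⟩) one_pos)
  refine ⟨a + 2 * k, by simp only [mem_range] at hk; omega, fun p hp => ?_⟩
  by_cases hp2 : p = 2
  · subst hp2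
    push_cast
    rw [← add_assoc, ← even_iff_two_dvd, Int.not_even_iff_odd]
    exact hxa.add_even (even_two_mul _)
  · simpa [add_assoc] using h p (mem_erase.mpr ⟨hp2, hp⟩)

lemma three_le_card_filter_not_three_dvd (x : ℤ) :
    3 ≤ #((range 5).filter fun i : ℕ => ¬ (3 : ℤ) ∣ x + i) := by
  have hx : ∀ i : ℕ, (3 : ℤ) ∣ x + i ↔ (3 : ℤ) ∣ x % 3 + i := fun i => by
    rw [Int.emod_def, sub_add_eq_add_sub, dvd_sub_left (dvd_mul_right _ _)]
  simp_rw [hx]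
  obtain ⟨r, hr⟩ := Int.eq_ofNat_of_zero_le (Int.emod_nonneg x (by norm_num : (3 : ℤ) ≠ 0))
  have : r < 3 := by have := Int.emod_lt_of_pos x (by norm_num : (0 : ℤ) < 3); omega
  rw [hr]
  interval_cases r <;> decide

lemma exists_window_of_three_mem (P : Finset ℕ) (h3 : 3 ∈ P) (hcard : #P ≤ 3)
    (hbig : ∀ p ∈ P, p ≠ 3 → 5 ≤ p) (x : ℤ) :
    ∃ i : ℕ, i < 5 ∧ ∀ p ∈ P, ¬ (p : ℤ) ∣ x + i := by
  obtain ⟨i, hi, h⟩ := exists_forall_not_dvd_of_card_lt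
    ((range 5).filter fun i : ℕ => ¬ (3 : ℤ) ∣ x + i) (fun i : ℕ => x + i) (P.erase 3)
    (fun p hp i hi j hj hpi hpj => by
      have := hbig p (mem_erase.mp hp).2 (mem_erase.mp hp).1
      simp only [mem_filter, mem_range] at hi hj
      exact eq_of_dvd_add_of_dvd_add hpi hpj (by omega) (by omega))
    (by have := three_le_card_filter_not_three_dvd x; rw [card_erase_of_mem h3]; omega)
  obtain ⟨hi5, hi3⟩ := mem_filter.mp hi
  refine ⟨i, mem_range.mp hi5, fun p hp => ?_⟩
  by_cases hp3 : p = 3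
  · subst hp3; exact_mod_cast hi3
  · exact h p (mem_erase.mpr ⟨hp3, hp⟩)

lemma exists_window_of_card_le_three (P : Finset ℕ) (hP : ∀ p ∈ P, p.Prime) (hne : P.Nonempty)
    (hcard : #P ≤ 3) :
    ∃ q ∈ P, ∃ L : ℕ, 0 < L ∧ (∀ x : ℤ, ∃ i : ℕ, i < L ∧ ∀ p ∈ P, ¬ (p : ℤ) ∣ x + i) ∧
      ∀ k l, k ≤ q * l → #P + l ≤ k → L ≤ k := by
  have hpos := card_pos.mpr hne
  by_cases h2 : 2 ∈ P
  · refine ⟨2, h2, 2 * #P, by omega, exists_window_of_two_mem P hP h2 fun p hp hp2 => ?_,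
      fun k l hk hl => by omega⟩
    have := (hP p hp).two_le
    omega
  by_cases h3 : 3 ∈ P ∧ #P = 3
  · exact ⟨3, h3.1, 5, by norm_num, exists_window_of_three_mem P h3.1 hcard fun p hp hp3 =>
      (hP p hp).five_le_of_ne_two_of_ne_three (fun h => h2 (h ▸ hp)) hp3, fun k l hk hl => by omega⟩
  obtain ⟨q, hq⟩ := hne
  refine ⟨q, hq, #P + 1, by omega, exists_window_of_forall_card_lt P fun p hp => ?_,
    fun k l hk hl => ?_⟩
  · have hp2 : p ≠ 2 := fun h => h2 (h ▸ hp)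
    by_cases hp3 : p = 3
    · have : #P ≠ 3 := fun h => h3 ⟨hp3 ▸ hp, h⟩
      omega
    · have := (hP p hp).five_le_of_ne_two_of_ne_three hp2 hp3; omega
  · rcases Nat.eq_zero_or_pos l with rfl | _ <;> omega

theorem stmt9 (n : ℕ) (hn : 0 < n) (hω : n.primeFactors.card ≤ 3)
    (hsq : ¬ Squarefree n) :
    domNum (unitaryCayley n) = jacobsthal n := by
  have hn1 : 1 < n := by
    have : n ≠ 1 := fun h => hsq (h ▸ squarefree_one)
    omega
  obtain ⟨q, hq, L, hL, hwin, hbound⟩ := exists_window_of_card_le_three n.primeFactors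
    (fun _ => Nat.prime_of_mem_primeFactors) (Nat.nonempty_primeFactors.mpr hn1) hω
  exact le_antisymm (domNum_le_jacobsthal hn.ne')
    ((jacobsthal_le_of_forall hn.ne' hL hwin).trans (le_domNum_unitaryCayley hn.ne' hsq hq hbound))
end

section
/- For every integer n = 2·p₁·p₂ where p₁ < p₂ are odd primes with 3 ≤ p₁, the domination number of the unitary Cayley graph X_n is strictly less than g(n), where g is Jacobsthal's function. -/
/-! By the Chinese remainder theorem `ℤ/nℤ ≅ 𝔽₂ × 𝔽_{p₁} × 𝔽_{p₂}`, and two vertices of `X_n` are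
adjacent iff they differ in every coordinate. The four binary words of even weight dominate `X_n`:
a vertex outside them differs everywhere from one of the two words whose first bit is not its own.
On the other side, the `x` with `x ≡ 0 (mod 2)`, `x ≡ -1 (mod p₁)`, `x ≡ -3 (mod p₂)` starts a run
`x, x + 1, x + 2, x + 3` of integers sharing a factor with `n`, so `γ(X_n) ≤ 4 < g(n)`. -/

theorem Int.gcd_natCast_eq_one_iff_isUnit (a : ℤ) (n : ℕ) :
    Int.gcd a n = 1 ↔ IsUnit (a : ZMod n) := by
  rw [ZMod.coe_int_isUnit_iff_isCoprime, isCoprime_comm, Int.isCoprime_iff_gcd_eq_one]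

theorem lt_jacobsthal_of_forall_not_isUnit {n m : ℕ} [NeZero n] (z : ZMod n)
    (h : ∀ i < m, ¬IsUnit (z + i)) : m < jacobsthal n := by
  -- among any `n` consecutive integers one is `≡ 1 (mod n)`
  have hne : {m | 0 < m ∧ ∀ x : ℤ, ∃ i : ℕ, i < m ∧ Int.gcd (x + i) n = 1}.Nonempty := by
    refine ⟨n, Nat.pos_of_neZero n, fun x => ⟨((1 - x : ℤ) : ZMod n).val, ZMod.val_lt _, ?_⟩⟩
    rw [Int.gcd_natCast_eq_one_iff_isUnit]
    simp
  obtain ⟨-, hcover⟩ := Nat.sInf_mem hne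
  by_contra! hle
  obtain ⟨i, hi, hgcd⟩ := hcover z.val
  rw [Int.gcd_natCast_eq_one_iff_isUnit] at hgcd
  exact h i (hi.trans_le hle) (by simpa using hgcd)

theorem unitaryCayley_adj_iff_of_ringEquiv {n : ℕ} {K L M : Type*} [Field K] [Field L] [Field M]
    (e : ZMod n ≃+* (K × L) × M) {x y : ZMod n} :
    (unitaryCayley n).Adj x y ↔
      (e x).1.1 ≠ (e y).1.1 ∧ (e x).1.2 ≠ (e y).1.2 ∧ (e x).2 ≠ (e y).2 := by
  have hunit : IsUnit (x - y) ↔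
      (e x).1.1 ≠ (e y).1.1 ∧ (e x).1.2 ≠ (e y).1.2 ∧ (e x).2 ≠ (e y).2 := by
    rw [← isUnit_map_iff e, Prod.isUnit_iff, Prod.isUnit_iff]
    simp only [isUnit_iff_ne_zero, map_sub, Prod.fst_sub, Prod.snd_sub, sub_ne_zero, and_assoc]
  refine ⟨fun h => hunit.1 h.2, fun h => ⟨?_, hunit.2 h⟩⟩
  rintro rfl
  exact h.2.2 rfl

theorem ne_and_ne_or_ne_and_ne_or_mixed {K L : Type*} {b b₀ b₁ : K} {c c₀ c₁ : L}
    (hb : b₀ ≠ b₁) (hc : c₀ ≠ c₁) :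
    (b ≠ b₀ ∧ c ≠ c₀) ∨ (b ≠ b₁ ∧ c ≠ c₁) ∨ (b = b₀ ∧ c = c₁) ∨ (b = b₁ ∧ c = c₀) := by
  grind

def evenWeightCode (K L : Type*) [Zero K] [One K] [Zero L] [One L] : Set ((ZMod 2 × K) × L) :=
  {((0, 0), 0), ((0, 1), 1), ((1, 0), 1), ((1, 1), 0)}

section EvenWeightCode

variable {K L : Type*} [Zero K] [One K] [NeZero (1 : K)] [Zero L] [One L] [NeZero (1 : L)]

theorem evenWeightCode_ncard : (evenWeightCode K L).ncard = 4 := by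
  rw [evenWeightCode, Set.ncard_insert_of_notMem, Set.ncard_insert_of_notMem,
    Set.ncard_pair] <;> simp

theorem evenWeightCode_dominates (v : (ZMod 2 × K) × L) :
    v ∈ evenWeightCode K L ∨ ∃ s ∈ evenWeightCode K L,
      v.1.1 ≠ s.1.1 ∧ v.1.2 ≠ s.1.2 ∧ v.2 ≠ s.2 := by
  obtain ⟨⟨a, b⟩, c⟩ := v
  rcases (by decide : ∀ t : ZMod 2, t = 0 ∨ t = 1) a with rfl | rfl
  · rcases ne_and_ne_or_ne_and_ne_or_mixed (b := b) (c := c) (zero_ne_one' K)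
      (one_ne_zero' L) with h | h | ⟨rfl, rfl⟩ | ⟨rfl, rfl⟩
    · exact .inr ⟨((1, 0), 1), by simp [evenWeightCode], zero_ne_one, h⟩
    · exact .inr ⟨((1, 1), 0), by simp [evenWeightCode], zero_ne_one, h⟩
    all_goals exact .inl (by simp [evenWeightCode])
  · rcases ne_and_ne_or_ne_and_ne_or_mixed (b := b) (c := c) (zero_ne_one' K)
      (zero_ne_one' L) with h | h | ⟨rfl, rfl⟩ | ⟨rfl, rfl⟩
    · exact .inr ⟨((0, 0), 0), by simp [evenWeightCode], one_ne_zero, h⟩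
    · exact .inr ⟨((0, 1), 1), by simp [evenWeightCode], one_ne_zero, h⟩
    all_goals exact .inl (by simp [evenWeightCode])

end EvenWeightCode

theorem domNum_unitaryCayley_le_four {n : ℕ} {K L : Type*} [Field K] [Field L]
    (e : ZMod n ≃+* (ZMod 2 × K) × L) : domNum (unitaryCayley n) ≤ 4 := by
  refine Nat.sInf_le ⟨e ⁻¹' evenWeightCode K L, fun v => ?_, ?_⟩
  · refine (evenWeightCode_dominates (e v)).imp id fun ⟨s, hs, hne⟩ => ⟨e.symm s, ?_, ?_⟩
    · simpa using hs
    · simpa [unitaryCayley_adj_iff_of_ringEquiv e] using hne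
  · rw [Set.ncard_preimage_of_injective_subset_range e.injective (by simp), evenWeightCode_ncard]

theorem four_lt_jacobsthal {n : ℕ} [NeZero n] {K L : Type*} [CommRing K] [Nontrivial K]
    [CommRing L] [Nontrivial L] (e : ZMod n ≃+* (ZMod 2 × K) × L) : 4 < jacobsthal n := by
  refine lt_jacobsthal_of_forall_not_isUnit (e.symm ((0, -1), -3)) fun i hi hunit => ?_
  rw [← isUnit_map_iff e, map_add, RingEquiv.apply_symm_apply, map_natCast,
    Prod.isUnit_iff, Prod.isUnit_iff] at hunit
  obtain ⟨⟨h2, hK⟩, hL⟩ := hunit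
  interval_cases i
  · simp at h2
  · simp at hK
  · exact h2.ne_zero rfl
  · norm_num at hL

theorem stmt10 (p₁ p₂ n : ℕ) (hp₁ : p₁.Prime) (hp₂ : p₂.Prime)
    (h1 : 3 ≤ p₁) (h12 : p₁ < p₂) (hn : n = 2 * p₁ * p₂) :
    domNum (unitaryCayley n) < jacobsthal n := by
  subst hn
  have : Fact p₁.Prime := ⟨hp₁⟩
  have : Fact p₂.Prime := ⟨hp₂⟩
  have h2p₁ : Nat.Coprime 2 p₁ := (Nat.coprime_primes Nat.prime_two hp₁).2 (by omega)
  have h2p₁p₂ : Nat.Coprime (2 * p₁) p₂ :=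
    ((Nat.coprime_primes Nat.prime_two hp₂).2 (by omega)).mul_left
      ((Nat.coprime_primes hp₁ hp₂).2 h12.ne)
  let e : ZMod (2 * p₁ * p₂) ≃+* (ZMod 2 × ZMod p₁) × ZMod p₂ :=
    (ZMod.chineseRemainder h2p₁p₂).trans
      ((ZMod.chineseRemainder h2p₁).prodCongr (RingEquiv.refl _))
  exact (domNum_unitaryCayley_le_four e).trans_lt (four_lt_jacobsthal e)
end

section
/- Let q be a prime with q ≡ 1 (mod 3), let k = 2(q-1)/3, and let p₁, ..., p_k be distinct primes each at least q + 3 (and distinct from 3 and q). Let n = 3·q·p₁⋯p_k. Then g(n) ≥ q + 4, where g is Jacobsthal's function. -/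
/- A run of `q + 3` consecutive integers is built in which every member shares a prime with
`n`: the multiples of 3 among the offsets `0, …, q + 2` are handled by 3, the offsets `1` and
`q + 1` by `q`, and the remaining `2 (q - 1) / 3` offsets by the primes `p i`, one each. Since
the moduli are distinct primes, the Chinese remainder theorem puts every offset in its assigned
class simultaneously. -/

theorem exists_lt_int_gcd_add_eq_one {n : ℕ} (hn : n ≠ 0) (x : ℤ) :
    ∃ i : ℕ, i < n ∧ Int.gcd (x + i) n = 1 := by
  have hn' : (0 : ℤ) < n := by exact_mod_cast Nat.pos_of_ne_zero hn
  have hlt : (1 - x) % n < n := Int.emod_lt_of_pos _ hn'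
  refine ⟨((1 - x) % n).toNat, by omega, Int.isCoprime_iff_gcd_eq_one.mp ⟨1, (1 - x) / n, ?_⟩⟩
  rw [Int.toNat_of_nonneg (Int.emod_nonneg _ hn'.ne'), Int.emod_def]
  ring

theorem lt_jacobsthal_of_forall_gcd_ne_one {n m : ℕ} (hn : n ≠ 0) (x : ℤ)
    (hx : ∀ i < m, Int.gcd (x + i) n ≠ 1) : m < jacobsthal n := by
  have hmem : jacobsthal n ∈ {m | 0 < m ∧ ∀ x : ℤ, ∃ i : ℕ, i < m ∧ Int.gcd (x + i) n = 1} :=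
    Nat.sInf_mem ⟨n, Nat.pos_of_ne_zero hn, exists_lt_int_gcd_add_eq_one hn⟩
  obtain ⟨i, hi, hgcd⟩ := hmem.2 x
  by_contra! hle
  exact hx i (hi.trans_le hle) hgcd

theorem exists_forall_dvd_add_of_covering {ι : Type*} [Fintype ι] {m : ℕ} (d c : ι → ℕ)
    (hd : ∀ j, d j ≠ 0) (hcop : Pairwise fun a b => Nat.Coprime (d a) (d b))
    (hcover : ∀ i < m, ∃ j, i ≡ c j [MOD d j]) :
    ∃ x : ℕ, ∀ i < m, ∃ j, d j ∣ x + i := by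
  -- `(d j - 1) * c j` stands for `-c j` modulo `d j`
  obtain ⟨x, hx⟩ := Nat.chineseRemainderOfFinset (fun j => (d j - 1) * c j) d Finset.univ
    (fun j _ => hd j) (fun a _ b _ hab => hcop hab)
  refine ⟨x, fun i hi => ?_⟩
  obtain ⟨j, hj⟩ := hcover i hi
  refine ⟨j, Nat.modEq_zero_iff_dvd.mp ?_⟩
  calc x + i ≡ (d j - 1) * c j + c j [MOD d j] := (hx j (Finset.mem_univ j)).add hj
    _ = d j * c j := by rw [← add_one_mul, Nat.sub_one_add_one (hd j)]
    _ ≡ 0 [MOD d j] := Nat.modEq_zero_iff_dvd.mpr (dvd_mul_right _ _)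

theorem lt_jacobsthal_of_covering {ι : Type*} [Fintype ι] {n m : ℕ} (hn : n ≠ 0)
    (d c : ι → ℕ) (hdn : ∀ j, d j ∣ n) (hd : ∀ j, d j ≠ 1)
    (hcop : Pairwise fun a b => Nat.Coprime (d a) (d b))
    (hcover : ∀ i < m, ∃ j, i ≡ c j [MOD d j]) : m < jacobsthal n := by
  obtain ⟨x, hx⟩ := exists_forall_dvd_add_of_covering d c
    (fun j h => hn (Nat.eq_zero_of_zero_dvd (h ▸ hdn j))) hcop hcover
  refine lt_jacobsthal_of_forall_gcd_ne_one hn x fun i hi hgcd => ?_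
  obtain ⟨j, hj⟩ := hx i hi
  have : d j ∣ Nat.gcd (x + i) n := Nat.dvd_gcd hj (hdn j)
  rw [← Int.gcd_natCast_natCast, Nat.cast_add, hgcd] at this
  exact hd j (Nat.dvd_one.mp this)

theorem lt_jacobsthal_of_prime_covering {ι : Type*} [Fintype ι] {n m : ℕ} (hn : n ≠ 0)
    (d c : ι → ℕ) (hd : Function.Injective d) (hprime : ∀ j, (d j).Prime) (hdn : ∀ j, d j ∣ n)
    (hcover : ∀ i < m, ∃ j, i ≡ c j [MOD d j]) : m < jacobsthal n :=
  lt_jacobsthal_of_covering hn d c hdn (fun j => (hprime j).ne_one)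
    (fun a b hab => (Nat.coprime_primes (hprime a) (hprime b)).2 (hd.ne hab)) hcover

-- `3 * (j / 2) + 2 + 2 * (j % 2)` runs through `2, 4, 5, 7, 8, …, q` as `j` runs below
-- `2 * (q - 1) / 3`.
theorem mod_three_eq_zero_or_exists_of_lt_add_three {q i : ℕ} (hq3 : q % 3 = 1)
    (hi : i < q + 3) :
    i % 3 = 0 ∨ i = 1 ∨ i = q + 1 ∨
      ∃ j < 2 * (q - 1) / 3, 3 * (j / 2) + 2 + 2 * (j % 2) = i := by
  by_cases h : i % 3 = 0 ∨ i = 1 ∨ i = q + 1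
  · tauto
  · exact Or.inr (Or.inr (Or.inr ⟨2 * (i / 3) + i % 3 - 2, by omega, by omega⟩))

theorem stmt12_general (q k : ℕ) (hq : q.Prime) (hq3 : q % 3 = 1) (hk : k = 2 * (q - 1) / 3)
    (p : Fin k → ℕ) (hp : ∀ i, (p i).Prime) (hinj : Function.Injective p)
    (hne3 : ∀ i, p i ≠ 3) (hneq : ∀ i, p i ≠ q)
    (n : ℕ) (hn : n = 3 * q * ∏ i, p i) :
    q + 4 ≤ jacobsthal n := by
  let d : Fin 2 ⊕ Fin k → ℕ := Sum.elim ![3, q] p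
  let c : Fin 2 ⊕ Fin k → ℕ := Sum.elim ![0, 1] fun j => 3 * (j / 2) + 2 + 2 * (j % 2)
  have hd_inj : Function.Injective d := by
    refine Function.Injective.sumElim ?_ hinj ?_
    · simp [Function.Injective, Fin.forall_fin_two]
      omega
    · simp [Fin.forall_fin_two, Ne.symm (hne3 _), Ne.symm (hneq _)]
  have hd_prime : ∀ j, (d j).Prime := by
    simpa [d, Sum.forall, Fin.forall_fin_two] using ⟨⟨Nat.prime_three, hq⟩, hp⟩
  have hdn : ∀ j, d j ∣ n := by
    simp [d, Sum.forall, Fin.forall_fin_two, hn, Dvd.dvd.mul_right, Dvd.dvd.mul_left,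
      Finset.dvd_prod_of_mem]
  have hn0 : n ≠ 0 := by simp [hn, hq.ne_zero, Finset.prod_eq_zero_iff, (hp _).ne_zero]
  refine lt_jacobsthal_of_prime_covering hn0 d c hd_inj hd_prime hdn fun i hi => ?_
  rcases mod_three_eq_zero_or_exists_of_lt_add_three hq3 hi with h3 | rfl | rfl | ⟨j, hj, rfl⟩
  · exact ⟨.inl 0, h3⟩
  · exact ⟨.inl 1, Nat.ModEq.refl 1⟩
  · exact ⟨.inl 1, Nat.add_modEq_left⟩
  · exact ⟨.inr ⟨j, hk ▸ hj⟩, Nat.ModEq.refl _⟩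

theorem stmt12 (q k : ℕ) (hq : q.Prime) (hq3 : q % 3 = 1) (hk : k = 2 * (q - 1) / 3)
    (p : Fin k → ℕ) (hp : ∀ i, (p i).Prime) (hinj : Function.Injective p)
    (hge : ∀ i, q + 3 ≤ p i) (hne3 : ∀ i, p i ≠ 3) (hneq : ∀ i, p i ≠ q)
    (n : ℕ) (hn : n = 3 * q * ∏ i, p i) :
    q + 4 ≤ jacobsthal n :=
  stmt12_general q k hq hq3 hk p hp hinj hne3 hneq n hn
end

section
/- Let G = K[a₁,b₁] × ⋯ × K[a_t,b_t] with 2 ≤ b₁ ≤ ⋯ ≤ b_t. The vertex set of G can be partitioned into (1/b₁)·∏_{i=1}^t a_i b_i cliques each of size b₁. -/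
/-! Let `d = b₀` be the smallest `bᵢ`. Adding the constant vectors `0, 1, …, d - 1` to a vertex
shifts every coordinate by amounts that are pairwise distinct modulo each `bᵢ ≥ d`, so these `d`
translates form a clique. Every vertex is `c + j` for exactly one `j < d` and one `c` in the kernel
of `x ↦ x₀ mod d`, so translating that kernel by `{0, …, d - 1}` tiles the vertex set. -/

open Set

def AddMonoidHom.kerProdEquivOfRightInverse {G Q : Type*} [AddGroup G] [AddGroup Q]
    (π : G →+ Q) (ℓ : Q → G) (hℓ : Function.RightInverse ℓ π) : π.ker × Q ≃ G where
  toFun p := p.1 + ℓ p.2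
  invFun x := (⟨x - ℓ (π x), by rw [π.mem_ker, map_sub, hℓ, sub_self]⟩, π x)
  left_inv := by
    rintro ⟨⟨c, hc⟩, q⟩
    have hq : π (c + ℓ q) = q := by rw [map_add, π.mem_ker.mp hc, hℓ q, zero_add]
    ext <;> simp [hq]
  right_inv x := sub_add_cancel x (ℓ (π x))

namespace Equiv

variable {α β V : Type*}

def rows (e : α × β ≃ V) : Set (Set V) :=
  range fun a => range fun b => e (a, b)

variable (e : α × β ≃ V)

lemma ncard_of_mem_rows {C : Set V} (hC : C ∈ e.rows) : C.ncard = Nat.card β := by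
  obtain ⟨a, rfl⟩ := hC
  exact ncard_range_of_injective fun b b' h => congrArg Prod.snd (e.injective h)

variable [Nonempty β]

lemma isPartition_rows : Setoid.IsPartition e.rows := by
  refine ⟨?_, fun x => ⟨_, ⟨⟨(e.symm x).1, rfl⟩, (e.symm x).2, by simp⟩, ?_⟩⟩
  · rintro ⟨a, ha⟩
    exact (range_nonempty fun b => e (a, b)).ne_empty ha
  · rintro _ ⟨⟨a, rfl⟩, b, rfl⟩
    simp

lemma ncard_rows : e.rows.ncard = Nat.card α := by
  refine ncard_range_of_injective fun a a' h => ?_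
  obtain ⟨b', hb'⟩ : e (a, Classical.arbitrary β) ∈ range fun b => e (a', b) :=
    h ▸ mem_range_self _
  exact (congrArg Prod.fst (e.injective hb')).symm

end Equiv

lemma ZMod.natCast_val_add_natCast {m n : ℕ} [NeZero m] (h : n ∣ m) (x : ZMod m) (k : ℕ) :
    (((x + k).val : ℕ) : ZMod n) = (x.val : ZMod n) + k := by
  simp only [ZMod.natCast_val, ZMod.cast_add h, ZMod.cast_natCast h]

lemma multipartiteProd_isClique_range_add_natCast {t : ℕ} {a b : Fin t → ℕ}
    [∀ i, NeZero (a i * b i)] {d : ℕ} [NeZero d] (hd : ∀ i, d ≤ b i)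
    (c : ∀ i, ZMod (a i * b i)) :
    (multipartiteProd t a b).IsClique
      (range fun r : ZMod d => c + (r.val : ∀ i, ZMod (a i * b i))) := by
  rintro _ ⟨r, rfl⟩ _ ⟨r', rfl⟩ hne
  refine ⟨hne, fun i => ?_⟩
  dsimp only at hne ⊢
  have hrr' : r.val ≠ r'.val := fun h => hne (by rw [ZMod.val_injective d h])
  have hlt : ∀ s : ZMod d, s.val < b i := fun s => (ZMod.val_lt s).trans_le (hd i)
  rw [Ne, ← ZMod.natCast_eq_natCast_iff', Pi.add_apply, Pi.add_apply, Pi.natCast_apply,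
    Pi.natCast_apply, ZMod.natCast_val_add_natCast (dvd_mul_left _ _),
    ZMod.natCast_val_add_natCast (dvd_mul_left _ _), add_right_inj, ZMod.natCast_eq_natCast_iff',
    Nat.mod_eq_of_lt (hlt r), Nat.mod_eq_of_lt (hlt r')]
  exact hrr'

theorem stmt17 (t : ℕ) (ht : 0 < t) (a b : Fin t → ℕ) (ha : ∀ i, 0 < a i)
    (hb : 2 ≤ b ⟨0, ht⟩) (hmono : Monotone b) :
    ∃ 𝒞 : Set (Set (∀ i, ZMod (a i * b i))),
      Setoid.IsPartition 𝒞 ∧ 𝒞.ncard = (∏ i, a i * b i) / b ⟨0, ht⟩ ∧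
      ∀ C ∈ 𝒞, (multipartiteProd t a b).IsClique C ∧ C.ncard = b ⟨0, ht⟩ := by
  set d := b ⟨0, ht⟩
  have hd : ∀ i, d ≤ b i := fun i => hmono (Fin.mk_le_mk.mpr (Nat.zero_le _))
  have : NeZero d := ⟨by omega⟩
  have : ∀ i, NeZero (a i * b i) := fun i =>
    ⟨Nat.mul_ne_zero (ha i).ne' (by have := hd i; omega)⟩
  let π := ((ZMod.castHom (dvd_mul_left d (a ⟨0, ht⟩)) (ZMod d)).comp
    (Pi.evalRingHom (fun i => ZMod (a i * b i)) ⟨0, ht⟩)).toAddMonoidHom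
  let e := π.kerProdEquivOfRightInverse (fun r => (r.val : ∀ i, ZMod (a i * b i)))
    fun r => by simp [π]
  refine ⟨e.rows, e.isPartition_rows, ?_, fun C hC => ⟨?_, ?_⟩⟩
  · rw [e.ncard_rows]
    refine (Nat.div_eq_of_eq_mul_left (NeZero.pos d) ?_).symm
    simpa only [Nat.card_prod, Nat.card_zmod, Nat.card_pi] using (Nat.card_congr e).symm
  · obtain ⟨c, rfl⟩ := hC
    exact multipartiteProd_isClique_range_add_natCast hd c.1
  · rw [e.ncard_of_mem_rows hC, Nat.card_zmod]
end

section
/- Let G = K[a₁,b₁] × ⋯ × K[a_t,b_t] with 2 ≤ b₁ ≤ ⋯ ≤ b_t, and let n = ∏_{i=1}^t a_i b_i. If D is a minimal dominating set of G with ℓ lonely vertices (vertices of D not adjacent to any vertex of D) and s social vertices (vertices of D adjacent to some vertex of D), then b₁·ℓ + 2·s ≤ n. In particular, if b₁ = 2, then Γ(G) = n/2. -/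
/-!
Split the vertices by their part in the first factor: `x` lies in class `x₁ mod b₁`. The `b₁`
classes are independent sets of size `n / b₁`, and they are maximum independent sets, because the
translates `{v + j·𝟙 | j < b₁}` are cliques (as `b₁ ≤ bᵢ`) covering every vertex `b₁` times.
Let `L` be the lonely vertices and `N[L]` their closed neighbourhood. For every class `A` the set
`L ∪ (A \ N[L])` is independent, so `|L| ≤ |A ∩ N[L]|`; summing over the classes, `b₁ ℓ ≤ |N[L]|`.
The `s` social vertices and their private neighbours are `2 s` further vertices outside `N[L]`.
When `b₁ = 2`, the class of `0` is an independent dominating set of size `n / 2`.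
-/

open Finset

namespace SimpleGraph

variable {V : Type*} {G : SimpleGraph V}

theorem IsIndepSet.mul_card_le_of_forall_isClique [DecidableEq V] {ι : Type*} [Fintype ι]
    {C : ι → Finset V} (hC : ∀ i, G.IsClique (C i : Set V)) {k : ℕ}
    (hk : ∀ v, k ≤ #{i | v ∈ C i}) {U : Finset V} (hU : G.IsIndepSet (U : Set V)) :
    k * #U ≤ Fintype.card ι := by
  have h := card_mul_le_card_mul (fun v i => v ∈ C i) (s := U) (t := univ) (n := 1)
    (fun v _ => hk v) fun i _ => card_le_one.2 fun x hx y hy => ?_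
  · simpa [mul_comm] using h
  simp only [mem_bipartiteBelow] at hx hy
  by_contra hxy
  exact hU hx.1 hy.1 hxy (hC i hx.2 hy.2 hxy)

variable (G)

def lonely (D : Set V) : Set V := {d ∈ D | ∀ d' ∈ D, ¬ G.Adj d d'}

def social (D : Set V) : Set V := {d ∈ D | ∃ d' ∈ D, G.Adj d d'}

def closedNbhd (S : Set V) : Set V := {x | x ∈ S ∨ ∃ d ∈ S, G.Adj x d}

variable {G}

theorem isIndepSet_lonely (D : Set V) : G.IsIndepSet (G.lonely D) :=
  fun _ hx _ hy _ hxy => hx.2 _ hy.1 hxy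

theorem ncard_lonely_add_ncard_social [Finite V] (D : Set V) :
    (G.lonely D).ncard + (G.social D).ncard = D.ncard := by
  rw [← Set.ncard_union_eq]
  · congr 1
    ext x
    by_cases h : ∃ d' ∈ D, G.Adj x d' <;> simp_all [lonely, social]
  · exact Set.disjoint_left.2 fun x hl ⟨_, d', hd', hxd'⟩ => hl.2 d' hd' hxd'

theorem ncard_le_ncard_inter_closedNbhd [Finite V] {A L : Set V} (hA : G.IsIndepSet A)
    (hAmax : ∀ U, G.IsIndepSet U → U.ncard ≤ A.ncard) (hL : G.IsIndepSet L) :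
    L.ncard ≤ (A ∩ G.closedNbhd L).ncard := by
  set W := G.closedNbhd L
  have hind : G.IsIndepSet (L ∪ A \ W) := by
    refine Set.pairwise_union.2 ⟨hL, hA.mono Set.sdiff_subset, fun x hx y hy _ => ?_⟩
    exact ⟨fun hxy => hy.2 (Or.inr ⟨x, hx, hxy.symm⟩), fun hyx => hy.2 (Or.inr ⟨x, hx, hyx⟩)⟩
  have hdisj : Disjoint L (A \ W) := Set.disjoint_left.2 fun x hx hx' => hx'.2 (Or.inl hx)
  have h := hAmax _ hind
  rw [Set.ncard_union_eq hdisj, ← Set.ncard_inter_add_ncard_sdiff_eq_ncard A W] at h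
  omega

theorem card_mul_ncard_le_ncard_closedNbhd [Finite V] {α : Type*} [Fintype α] (f : V → α)
    (hf : ∀ c, G.IsIndepSet (f ⁻¹' {c}))
    (hfmax : ∀ c U, G.IsIndepSet U → U.ncard ≤ (f ⁻¹' {c}).ncard)
    {L : Set V} (hL : G.IsIndepSet L) :
    Fintype.card α * L.ncard ≤ (G.closedNbhd L).ncard := by
  classical
  have : Fintype V := Fintype.ofFinite V
  calc Fintype.card α * L.ncard = ∑ _c : α, L.ncard := by simp
    _ ≤ ∑ c, (f ⁻¹' {c} ∩ G.closedNbhd L).ncard :=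
      sum_le_sum fun c _ => ncard_le_ncard_inter_closedNbhd (hf c) (hfmax c) hL
    _ = (G.closedNbhd L).ncard := by
      simp only [Set.ncard_eq_toFinset_card']
      rw [card_eq_sum_card_fiberwise (f := f) (t := univ) (by simp)]
      refine sum_congr rfl fun c _ => congrArg card ?_
      ext x
      simp [and_comm]

end SimpleGraph

section Domination

variable {V : Type*} {G : SimpleGraph V}

theorem IsMinimalDomSet.exists_private_neighbor {D : Set V} (hD : IsMinimalDomSet G D) {d : V}
    (hd : d ∈ G.social D) : ∃ p ∉ D, G.Adj p d ∧ ∀ d' ∈ D, G.Adj p d' → d' = d := by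
  obtain ⟨hdD, e, heD, hde⟩ := hd
  obtain ⟨p, hp, hpD⟩ : ∃ p, p ∉ D \ {d} ∧ ∀ d' ∈ D \ {d}, ¬ G.Adj p d' := by
    simpa [IsDomSet] using hD.2 _ (Set.sdiff_singleton_ssubset.2 hdD)
  have hpd : p ≠ d := by
    rintro rfl
    exact hpD e ⟨heD, hde.ne'⟩ hde
  have hpD' : p ∉ D := fun h => hp ⟨h, hpd⟩
  have huniq : ∀ d' ∈ D, G.Adj p d' → d' = d := fun d' hd' hpd' => by
    by_contra hne
    exact hpD d' ⟨hd', hne⟩ hpd'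
  obtain hp' | ⟨d', hd', hpd'⟩ := hD.1 p
  · exact absurd hp' hpD'
  · exact ⟨p, hpD', huniq d' hd' hpd' ▸ hpd', huniq⟩

theorem IsMinimalDomSet.ncard_closedNbhd_lonely_add_two_mul_le [Finite V] {D : Set V}
    (hD : IsMinimalDomSet G D) :
    (G.closedNbhd (G.lonely D)).ncard + 2 * (G.social D).ncard ≤ Nat.card V := by
  choose! p hpD hpd huniq using fun d (hd : d ∈ G.social D) => hD.exists_private_neighbor hd
  set W := G.closedNbhd (G.lonely D)
  set S := G.social D
  have hSW : Disjoint S W := by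
    refine Set.disjoint_left.2 fun d ⟨hdD, e, heD, hde⟩ hdW => ?_
    obtain hl | ⟨d₀, hd₀, hdd₀⟩ := hdW
    · exact hl.2 e heD hde
    · exact hd₀.2 d hdD hdd₀.symm
  have hPW : Disjoint (p '' S) W := by
    refine Set.disjoint_left.2 ?_
    rintro - ⟨d, hd, rfl⟩ hpW
    obtain hl | ⟨d₀, hd₀, hpd₀⟩ := hpW
    · exact hpD d hd hl.1
    · obtain ⟨hdD, e, heD, hde⟩ := hd
      exact hd₀.2 e heD (huniq d ⟨hdD, e, heD, hde⟩ d₀ hd₀.1 hpd₀ ▸ hde)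
  have hSP : Disjoint S (p '' S) := by
    refine Set.disjoint_right.2 ?_
    rintro - ⟨d, hd, rfl⟩ hpS
    exact hpD d hd hpS.1
  have hinj : Set.InjOn p S := fun d₁ hd₁ d₂ hd₂ h =>
    huniq d₂ hd₂ d₁ hd₁.1 (h ▸ hpd d₁ hd₁)
  calc W.ncard + 2 * S.ncard = (W ∪ (S ∪ p '' S)).ncard := by
        rw [Set.ncard_union_eq (Set.disjoint_union_right.2 ⟨hSW.symm, hPW.symm⟩),
          Set.ncard_union_eq hSP, hinj.ncard_image, two_mul]
    _ ≤ Nat.card V := Set.ncard_le_card _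

theorem IsDomSet.isMinimalDomSet_of_isIndepSet {D : Set V} (hdom : IsDomSet G D)
    (hind : G.IsIndepSet D) : IsMinimalDomSet G D := by
  refine ⟨hdom, fun D' hD' hdom' => ?_⟩
  obtain ⟨x, hxD, hxD'⟩ := Set.exists_of_ssubset hD'
  obtain hx | ⟨d, hd, hxd⟩ := hdom' x
  · exact hxD' hx
  · exact hind hxD (hD'.subset hd) (fun h => hxD' (h ▸ hd)) hxd

theorem IsMinimalDomSet.card_mul_ncard_lonely_add_two_mul_ncard_social_le [Finite V] {D : Set V}
    (hD : IsMinimalDomSet G D) {α : Type*} [Fintype α] (f : V → α)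
    (hf : ∀ c, G.IsIndepSet (f ⁻¹' {c}))
    (hfmax : ∀ c U, G.IsIndepSet U → U.ncard ≤ (f ⁻¹' {c}).ncard) :
    Fintype.card α * (G.lonely D).ncard + 2 * (G.social D).ncard ≤ Nat.card V :=
  (Nat.add_le_add_right (G.card_mul_ncard_le_ncard_closedNbhd f hf hfmax
    (G.isIndepSet_lonely D)) _).trans hD.ncard_closedNbhd_lonely_add_two_mul_le

end Domination

theorem ZMod.natCast_injOn_Iio (m : ℕ) : Set.InjOn (Nat.cast : ℕ → ZMod m) (Set.Iio m) :=
  fun j hj j' hj' h => by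
    rwa [ZMod.natCast_eq_natCast_iff', Nat.mod_eq_of_lt hj, Nat.mod_eq_of_lt hj'] at h

section MultipartiteProd

variable {t : ℕ} {a b : Fin t → ℕ}

variable (a b) in
def multipartiteResidue (i : Fin t) : (∀ i, ZMod (a i * b i)) →+* ZMod (b i) :=
  (ZMod.castHom (dvd_mul_left (b i) (a i)) (ZMod (b i))).comp (Pi.evalRingHom _ i)

theorem multipartiteProd_adj_iff [∀ i, NeZero (a i * b i)] {x y : ∀ i, ZMod (a i * b i)} :
    (multipartiteProd t a b).Adj x y ↔
      x ≠ y ∧ ∀ i, multipartiteResidue a b i x ≠ multipartiteResidue a b i y := by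
  change (x ≠ y ∧ ∀ i, _) ↔ _
  simp only [multipartiteResidue, RingHom.comp_apply, Pi.evalRingHom_apply, ZMod.castHom_apply,
    ZMod.cast_eq_val, ne_eq, ZMod.natCast_eq_natCast_iff']

theorem isIndepSet_multipartiteResidue_fiber [∀ i, NeZero (a i * b i)] (i₀ : Fin t)
    (c : ZMod (b i₀)) :
    (multipartiteProd t a b).IsIndepSet (multipartiteResidue a b i₀ ⁻¹' {c}) :=
  fun _ hx _ hy _ hxy => (multipartiteProd_adj_iff.1 hxy).2 i₀ (hx.trans hy.symm)

variable [∀ i, NeZero (a i)] [∀ i, NeZero (b i)]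

theorem card_multipartiteProd_vertices :
    Fintype.card (∀ i, ZMod (a i * b i)) = ∏ i, a i * b i := by
  simp [Fintype.card_pi, ZMod.card]

theorem isClique_multipartiteProd_translates {i₀ : Fin t} (hmin : ∀ i, b i₀ ≤ b i)
    (v : ∀ i, ZMod (a i * b i)) :
    (multipartiteProd t a b).IsClique
      (((range (b i₀)).image fun j : ℕ => v + j : Finset _) : Set (∀ i, ZMod (a i * b i))) := by
  rintro _ hx _ hy hne
  obtain ⟨j, hj, rfl⟩ := mem_image.1 hx
  obtain ⟨j', hj', rfl⟩ := mem_image.1 hy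
  have hjj' : j ≠ j' := fun h => hne (h ▸ rfl)
  refine multipartiteProd_adj_iff.2 ⟨hne, fun i => ?_⟩
  simp only [map_add, map_natCast, ne_eq, add_right_inj]
  exact (ZMod.natCast_injOn_Iio (b i)).ne (Set.mem_Iio.2 ((mem_range.1 hj).trans_le (hmin i)))
    (Set.mem_Iio.2 ((mem_range.1 hj').trans_le (hmin i))) hjj'

theorem mul_ncard_le_of_isIndepSet_multipartiteProd {i₀ : Fin t} (hmin : ∀ i, b i₀ ≤ b i)
    {U : Set (∀ i, ZMod (a i * b i))} (hU : (multipartiteProd t a b).IsIndepSet U) :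
    b i₀ * U.ncard ≤ ∏ i, a i * b i := by
  classical
  rw [← card_multipartiteProd_vertices, Set.ncard_eq_toFinset_card']
  refine SimpleGraph.IsIndepSet.mul_card_le_of_forall_isClique
    (isClique_multipartiteProd_translates hmin) (fun u => ?_) (by simpa using hU)
  calc b i₀ = #((range (b i₀)).image fun j : ℕ => u - j) := by
        rw [card_image_of_injOn, card_range]
        intro j hj j' hj' h
        refine ZMod.natCast_injOn_Iio (b i₀) (by simpa using hj) (by simpa using hj') ?_
        simpa using congrArg (multipartiteResidue a b i₀) h
    _ ≤ _ := by
        refine card_le_card fun v hv => ?_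
        obtain ⟨j, hj, rfl⟩ := mem_image.1 hv
        simpa using ⟨j, mem_range.1 hj, sub_add_cancel u j⟩

theorem mul_ncard_multipartiteResidue_fiber (i₀ : Fin t) (c : ZMod (b i₀)) :
    b i₀ * (multipartiteResidue a b i₀ ⁻¹' {c}).ncard = ∏ i, a i * b i := by
  classical
  have hsurj : Function.Surjective (multipartiteResidue a b i₀) :=
    fun c => ⟨(c.val : ∀ i, ZMod (a i * b i)), by simp⟩
  rw [← card_multipartiteProd_vertices, ← card_univ,
    card_eq_sum_card_fiberwise (f := multipartiteResidue a b i₀) (t := univ) (by simp),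
    sum_congr rfl fun c' _ => AddMonoidHom.card_fiber_eq_of_mem_range
      (multipartiteResidue a b i₀) (hsurj c') (hsurj c)]
  simp [Set.ncard_eq_toFinset_card']

theorem ncard_le_ncard_multipartiteResidue_fiber {i₀ : Fin t} (hmin : ∀ i, b i₀ ≤ b i)
    (c : ZMod (b i₀)) {U : Set (∀ i, ZMod (a i * b i))}
    (hU : (multipartiteProd t a b).IsIndepSet U) :
    U.ncard ≤ (multipartiteResidue a b i₀ ⁻¹' {c}).ncard :=
  Nat.le_of_mul_le_mul_left (by
    rw [mul_ncard_multipartiteResidue_fiber]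
    exact mul_ncard_le_of_isIndepSet_multipartiteProd hmin hU) (NeZero.pos (b i₀))

theorem isDomSet_multipartiteResidue_fiber_zero (i₀ : Fin t) (hb : ∀ i, 2 ≤ b i) :
    IsDomSet (multipartiteProd t a b) (multipartiteResidue a b i₀ ⁻¹' {0}) := by
  intro v
  by_cases hv : multipartiteResidue a b i₀ v = 0
  · exact Or.inl hv
  set d := Function.update (v + 1) i₀ 0
  have hres : ∀ i, multipartiteResidue a b i v ≠ multipartiteResidue a b i d := by
    intro i
    by_cases hi : i = i₀
    · subst hi
      simpa [d, multipartiteResidue] using hv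
    · have : Fact (1 < b i) := ⟨hb i⟩
      simp [d, multipartiteResidue, hi]
  refine Or.inr ⟨d, by simp [d, multipartiteResidue], multipartiteProd_adj_iff.2
    ⟨fun h => hres i₀ (congrArg _ h), hres⟩⟩

end MultipartiteProd

theorem stmt18 (t : ℕ) (ht : 0 < t) (a b : Fin t → ℕ) (ha : ∀ i, 0 < a i)
    (hb : 2 ≤ b ⟨0, ht⟩) (hmono : Monotone b)
    (D : Set (∀ i, ZMod (a i * b i)))
    (hD : IsMinimalDomSet (multipartiteProd t a b) D)
    (ℓ s : ℕ)
    (hℓ : ℓ = {d ∈ D | ∀ d' ∈ D, ¬ (multipartiteProd t a b).Adj d d'}.ncard)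
    (hs : s = {d ∈ D | ∃ d' ∈ D, (multipartiteProd t a b).Adj d d'}.ncard) :
    b ⟨0, ht⟩ * ℓ + 2 * s ≤ ∏ i, a i * b i ∧
    (b ⟨0, ht⟩ = 2 →
      upperDomNum (multipartiteProd t a b) = (∏ i, a i * b i) / 2) := by
  set G := multipartiteProd t a b
  set i₀ : Fin t := ⟨0, ht⟩
  have hmin : ∀ i, b i₀ ≤ b i := fun i => hmono (Nat.zero_le i.val)
  have : ∀ i, NeZero (a i) := fun i => ⟨(ha i).ne'⟩
  have : ∀ i, NeZero (b i) := fun i => ⟨by have := hb.trans (hmin i); omega⟩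
  have hbound : ∀ D, IsMinimalDomSet G D →
      b i₀ * (G.lonely D).ncard + 2 * (G.social D).ncard ≤ ∏ i, a i * b i := fun D hD => by
    simpa [ZMod.card, Nat.card_eq_fintype_card, card_multipartiteProd_vertices] using
      hD.card_mul_ncard_lonely_add_two_mul_ncard_social_le (multipartiteResidue a b i₀)
        (isIndepSet_multipartiteResidue_fiber i₀)
        fun c _ hU => ncard_le_ncard_multipartiteResidue_fiber hmin c hU
  refine ⟨hℓ ▸ hs ▸ hbound D hD, fun hb₀ => IsGreatest.csSup_eq
    ⟨⟨multipartiteResidue a b i₀ ⁻¹' {0}, ?_, ?_⟩, ?_⟩⟩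
  · exact (isDomSet_multipartiteResidue_fiber_zero i₀ fun i => hb.trans (hmin i))
      |>.isMinimalDomSet_of_isIndepSet (isIndepSet_multipartiteResidue_fiber i₀ 0)
  · rw [← mul_ncard_multipartiteResidue_fiber i₀ 0, ← hb₀,
      Nat.mul_div_cancel_left _ (NeZero.pos _)]
  · rintro k ⟨D', hD', rfl⟩
    have := hbound D' hD'
    rw [hb₀] at this
    rw [← G.ncard_lonely_add_ncard_social]
    omega
end
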